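/- arXiv:1508.04266 — 3 statements merged into one kernel-verified Lean document; each statement's English description precedes it below -/
import Mathlib

section
/- Let X be a random vector in ℝ^d whose cumulant generating function φ(t) = log E[exp⟨X,t⟩] is finite for every t ∈ ℝ^d. Suppose that for every n ∈ ℕ, all t₁,…,tₙ ∈ ℝ^d, every h ∈ ℝ^d, and all u₁,…,uₙ ∈ [0,1] with u₁+⋯+uₙ = 1, one has φ(∑ᵢ uᵢtᵢ) − ∑ᵢ uᵢφ(tᵢ) = φ(h + ∑ᵢ uᵢtᵢ) − ∑ᵢ uᵢφ(tᵢ + h). Then there exist a vector μ ∈ ℝ^d and a symmetric positive semidefinite d×d real matrix Σ such that φ(t) = ⟨μ,t⟩ + ½⟨t, Σt⟩ for all t ∈ ℝ^d. -/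
open MeasureTheory Matrix Real Set QuadraticMap

/-! The cumulant generating function is convex by Hölder's inequality, hence continuous.
With `n = 2` and equal weights, the hypothesis says that for every `h` the polar
`x ↦ φ (h + x) - φ h - φ x` maps midpoints to midpoints; since it vanishes at `0` and is
continuous, it is linear. Hence the polar of `φ` is a symmetric bilinear form `B`,
`t ↦ φ t - B t t / 2` is additive and continuous, hence linear, and
`B t t = φ (2 • t) - 2 * φ t ≥ 0` by convexity and `φ 0 = 0`. -/

section Integral

variable {α : Type*} [MeasurableSpace α] {μ : Measure α}

theorem integral_rpow_mul_rpow_le {f g : α → ℝ} (hf0 : 0 ≤ f) (hg0 : 0 ≤ g)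
    (hf : Integrable f μ) (hg : Integrable g μ) {p q : ℝ} (hp : 0 ≤ p) (hq : 0 ≤ q)
    (hpq : p + q = 1) :
    ∫ a, f a ^ p * g a ^ q ∂μ ≤ (∫ a, f a ∂μ) ^ p * (∫ a, g a ∂μ) ^ q := by
  have hF0 : ∀ a, 0 ≤ f a ^ p * g a ^ q := fun a =>
    mul_nonneg (rpow_nonneg (hf0 a) p) (rpow_nonneg (hg0 a) q)
  rw [← ENNReal.ofReal_le_ofReal_iff
    (mul_nonneg (rpow_nonneg (integral_nonneg hf0) p) (rpow_nonneg (integral_nonneg hg0) q))]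
  calc ENNReal.ofReal (∫ a, f a ^ p * g a ^ q ∂μ)
      ≤ ∫⁻ a, ENNReal.ofReal (f a ^ p * g a ^ q) ∂μ := by
        simpa only [Real.enorm_of_nonneg (integral_nonneg hF0), Real.enorm_of_nonneg (hF0 _)]
          using enorm_integral_le_lintegral_enorm (μ := μ) fun a => f a ^ p * g a ^ q
    _ = ∫⁻ a, ENNReal.ofReal (f a) ^ p * ENNReal.ofReal (g a) ^ q ∂μ := by
        simp only [ENNReal.ofReal_mul (rpow_nonneg (hf0 _) p),
          ENNReal.ofReal_rpow_of_nonneg (hf0 _) hp, ENNReal.ofReal_rpow_of_nonneg (hg0 _) hq]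
    _ ≤ (∫⁻ a, ENNReal.ofReal (f a) ∂μ) ^ p * (∫⁻ a, ENNReal.ofReal (g a) ∂μ) ^ q :=
        ENNReal.lintegral_mul_norm_pow_le hf.aemeasurable.ennreal_ofReal
          hg.aemeasurable.ennreal_ofReal hp hq hpq
    _ = ENNReal.ofReal ((∫ a, f a ∂μ) ^ p * (∫ a, g a ∂μ) ^ q) := by
        rw [← ofReal_integral_eq_lintegral_ofReal hf (.of_forall hf0),
          ← ofReal_integral_eq_lintegral_ofReal hg (.of_forall hg0),
          ENNReal.ofReal_mul (rpow_nonneg (integral_nonneg hf0) p),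
          ENNReal.ofReal_rpow_of_nonneg (integral_nonneg hf0) hp,
          ENNReal.ofReal_rpow_of_nonneg (integral_nonneg hg0) hq]

theorem convexOn_log_integral_exp_dotProduct {ι : Type*} [Fintype ι] [NeZero μ]
    (X : α → ι → ℝ) (hint : ∀ t, Integrable (fun a => exp (X a ⬝ᵥ t)) μ) :
    ConvexOn ℝ univ fun t => log (∫ a, exp (X a ⬝ᵥ t) ∂μ) := by
  refine ⟨convex_univ, fun s _ t _ p q hp hq hpq => ?_⟩
  have hexp : ∀ a,
      exp (X a ⬝ᵥ (p • s + q • t)) = exp (X a ⬝ᵥ s) ^ p * exp (X a ⬝ᵥ t) ^ q := by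
    intro a
    rw [← exp_mul, ← exp_mul, ← exp_add, dotProduct_add, dotProduct_smul, dotProduct_smul,
      smul_eq_mul, smul_eq_mul, mul_comm p, mul_comm q]
  have hs := integral_exp_pos (hint s)
  have ht := integral_exp_pos (hint t)
  calc log (∫ a, exp (X a ⬝ᵥ (p • s + q • t)) ∂μ)
      ≤ log ((∫ a, exp (X a ⬝ᵥ s) ∂μ) ^ p * (∫ a, exp (X a ⬝ᵥ t) ∂μ) ^ q) := by
        refine log_le_log (integral_exp_pos (hint _)) ?_
        simp_rw [hexp]
        exact integral_rpow_mul_rpow_le (fun a => (exp_pos _).le) (fun a => (exp_pos _).le)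
          (hint s) (hint t) hp hq hpq
    _ = p • log (∫ a, exp (X a ⬝ᵥ s) ∂μ) + q • log (∫ a, exp (X a ⬝ᵥ t) ∂μ) := by
        rw [log_mul (rpow_pos_of_pos hs p).ne' (rpow_pos_of_pos ht q).ne',
          log_rpow hs, log_rpow ht, smul_eq_mul, smul_eq_mul]

end Integral

theorem isLinearMap_of_map_midpoint {E F : Type*} [AddCommGroup E] [Module ℝ E]
    [TopologicalSpace E] [ContinuousSMul ℝ E] [AddCommGroup F] [Module ℝ F] [TopologicalSpace F]
    [ContinuousSMul ℝ F] [T2Space F] {f : E → F} (hf : Continuous f) (h0 : f 0 = 0)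
    (hmid : ∀ x y, f (midpoint ℝ x y) = midpoint ℝ (f x) (f y)) : IsLinearMap ℝ f :=
  let L := (AddMonoidHom.ofMapMidpoint ℝ ℝ f h0 hmid).toRealLinearMap hf
  ⟨L.map_add, L.map_smul⟩

section Polar

variable {E : Type*} [AddCommGroup E] [Module ℝ E] {φ : E → ℝ}

theorem ConvexOn.polar_self_nonneg (hφ : ConvexOn ℝ univ φ) (h0 : φ 0 = 0) (t : E) :
    0 ≤ polar φ t t := by
  have := hφ.2 (mem_univ (t + t)) (mem_univ 0) (by norm_num : (0 : ℝ) ≤ 1 / 2)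
    (by norm_num : (0 : ℝ) ≤ 1 / 2) (by norm_num)
  rw [smul_zero, add_zero, smul_add, ← add_smul, h0] at this
  norm_num at this
  rw [polar]
  linarith

theorem exists_bilinForm_eq_polar (hlin : ∀ x, IsLinearMap ℝ (polar φ x)) :
    ∃ B : LinearMap.BilinForm ℝ E, B.IsSymm ∧ ∀ x y, B x y = polar φ x y := by
  refine ⟨LinearMap.mk₂ ℝ (polar φ) (fun x x' y => ?_) (fun c x y => ?_)
    (fun x => (hlin x).map_add) (fun c x => (hlin x).map_smul c), ⟨polar_comm φ⟩,
    fun x y => rfl⟩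
  · simp only [polar_comm φ _ y, (hlin y).map_add]
  · simp only [polar_comm φ _ y, (hlin y).map_smul]

theorem exists_linearMap_bilinForm_of_isLinearMap_polar [TopologicalSpace E] [ContinuousAdd E]
    [ContinuousSMul ℝ E] (hφ : Continuous φ) (hlin : ∀ x, IsLinearMap ℝ (polar φ x)) :
    ∃ (L : E →ₗ[ℝ] ℝ) (B : LinearMap.BilinForm ℝ E),
      B.IsSymm ∧ (∀ t, B t t = polar φ t t) ∧ ∀ t, φ t = L t + 1 / 2 * B t t := by
  obtain ⟨B, hBsymm, hB⟩ := exists_bilinForm_eq_polar hlin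
  have hadd : ∀ x y, φ (x + y) - 1 / 2 * B (x + y) (x + y)
      = (φ x - 1 / 2 * B x x) + (φ y - 1 / 2 * B y y) := by
    intro x y
    have := hBsymm.eq x y
    simp only [map_add, LinearMap.add_apply, hB x y, polar] at this ⊢
    linarith
  let q : E →+ ℝ := AddMonoidHom.mk' (fun t => φ t - 1 / 2 * B t t) hadd
  have hq : Continuous q := by
    change Continuous fun t => φ t - 1 / 2 * B t t
    simp only [hB, polar]
    fun_prop
  exact ⟨q.toRealLinearMap hq, B, hBsymm, fun t => hB t t, fun t => by simp [q]⟩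

end Polar

theorem LinearMap.BilinForm.posSemidef_toMatrix₂' {n : Type*} [Fintype n] [DecidableEq n]
    {B : LinearMap.BilinForm ℝ (n → ℝ)} (hB : B.IsSymm) (hB' : ∀ t, 0 ≤ B t t) :
    (LinearMap.toMatrix₂' ℝ B).PosSemidef := by
  refine posSemidef_iff_dotProduct_mulVec.mpr ⟨?_, fun x => ?_⟩
  · simp [isHermitian_iff_isSymm, IsSymm.ext_iff, LinearMap.toMatrix₂'_apply, hB.eq]
  · simpa [← Matrix.toLinearMap₂'_apply', Matrix.toLinearMap₂'_toMatrix'] using hB' x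

theorem LinearMap.apply_eq_dotProduct {n R : Type*} [Fintype n] [DecidableEq n]
    [CommSemiring R] (L : (n → R) →ₗ[R] R) (x : n → R) :
    L x = (fun i => L (Pi.single i 1)) ⬝ᵥ x := by
  conv_lhs => rw [pi_eq_sum_univ' x]
  simp [dotProduct, mul_comm]

theorem stmt_0_general {Ω : Type*} [MeasurableSpace Ω] (P : Measure Ω) [IsProbabilityMeasure P]
    {d : ℕ} (X : Ω → (Fin d → ℝ))
    (hint : ∀ t : Fin d → ℝ, Integrable (fun ω => Real.exp (X ω ⬝ᵥ t)) P)
    (φ : (Fin d → ℝ) → ℝ)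
    (hφ : ∀ t, φ t = Real.log (∫ ω, Real.exp (X ω ⬝ᵥ t) ∂P))
    (hstat : ∀ (n : ℕ) (t : Fin n → (Fin d → ℝ)) (h : Fin d → ℝ) (u : Fin n → ℝ),
      (∀ i, u i ∈ Set.Icc (0 : ℝ) 1) → (∑ i, u i) = 1 →
      φ (∑ i, u i • t i) - ∑ i, u i * φ (t i)
        = φ (h + ∑ i, u i • t i) - ∑ i, u i * φ (t i + h)) :
    ∃ (μ : Fin d → ℝ) (S : Matrix (Fin d) (Fin d) ℝ), S.IsSymm ∧ S.PosSemidef ∧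
      ∀ t : Fin d → ℝ, φ t = μ ⬝ᵥ t + (1 / 2) * (t ⬝ᵥ S.mulVec t) := by
  have hconv : ConvexOn ℝ univ φ := by
    simpa only [← funext hφ] using convexOn_log_integral_exp_dotProduct X hint
  have h0 : φ 0 = 0 := by simp [hφ]
  have hmid : ∀ h x y,
      polar φ h (midpoint ℝ x y) = midpoint ℝ (polar φ h x) (polar φ h y) := by
    intro h x y
    have := hstat 2 ![x, y] h ![1 / 2, 1 / 2]
      (fun i => by fin_cases i <;> norm_num) (by norm_num)
    simp only [Fin.sum_univ_two, Matrix.cons_val_zero, Matrix.cons_val_one, add_comm _ h]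
      at this
    simp only [polar, midpoint_eq_smul_add, invOf_eq_inv, ← one_div, smul_add, smul_eq_mul]
    linarith
  have hcont : Continuous φ := hconv.locallyLipschitz.continuous
  have hlin : ∀ h, IsLinearMap ℝ (polar φ h) := fun h =>
    isLinearMap_of_map_midpoint (by unfold polar; fun_prop) (by simp [polar, h0]) (hmid h)
  obtain ⟨L, B, hBsymm, hBpolar, hφLB⟩ :=
    exists_linearMap_bilinForm_of_isLinearMap_polar hcont hlin
  have hS := LinearMap.BilinForm.posSemidef_toMatrix₂' hBsymm
    fun t => hBpolar t ▸ hconv.polar_self_nonneg h0 t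
  refine ⟨fun i => L (Pi.single i 1), _, isHermitian_iff_isSymm.mp hS.isHermitian, hS,
    fun t => ?_⟩
  rw [hφLB t, ← Matrix.toLinearMap₂'_apply', Matrix.toLinearMap₂'_toMatrix',
    L.apply_eq_dotProduct t]

/-- If the everywhere-finite cumulant generating function
`φ(t) = log E[exp⟨X,t⟩]` of a random vector `X` in `ℝ^d` satisfies the shift-invariance
identity for all convex combinations, then `φ` is a quadratic polynomial
`φ(t) = ⟨μ,t⟩ + ½⟨t, Σt⟩` with `Σ` symmetric positive semidefinite. -/
theorem stmt_0 {Ω : Type*} [MeasurableSpace Ω] (P : Measure Ω) [IsProbabilityMeasure P]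
    {d : ℕ} (X : Ω → (Fin d → ℝ)) (hX : Measurable X)
    (hint : ∀ t : Fin d → ℝ, Integrable (fun ω => Real.exp (X ω ⬝ᵥ t)) P)
    (φ : (Fin d → ℝ) → ℝ)
    (hφ : ∀ t, φ t = Real.log (∫ ω, Real.exp (X ω ⬝ᵥ t) ∂P))
    (hstat : ∀ (n : ℕ) (t : Fin n → (Fin d → ℝ)) (h : Fin d → ℝ) (u : Fin n → ℝ),
      (∀ i, u i ∈ Set.Icc (0 : ℝ) 1) → (∑ i, u i) = 1 →
      φ (∑ i, u i • t i) - ∑ i, u i * φ (t i)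
        = φ (h + ∑ i, u i • t i) - ∑ i, u i * φ (t i + h)) :
    ∃ (μ : Fin d → ℝ) (S : Matrix (Fin d) (Fin d) ℝ), S.IsSymm ∧ S.PosSemidef ∧
      ∀ t : Fin d → ℝ, φ t = μ ⬝ᵥ t + (1 / 2) * (t ⬝ᵥ S.mulVec t) :=
  stmt_0_general P X hint φ hφ hstat
end

section
/- Let X be a random vector in ℝ^d whose cumulant generating function φ(t) = log E[exp⟨X,t⟩] is finite for every t ∈ ℝ^d. Suppose that for all t₁, t₂, h ∈ ℝ^d and all δ ∈ [0,1], one has φ((1−δ)t₁ + δt₂) − (1−δ)φ(t₁) − δφ(t₂) = φ((1−δ)t₁ + δt₂ + h) − (1−δ)φ(t₁ + h) − δφ(t₂ + h). Then there exist a vector μ ∈ ℝ^d and a symmetric positive semidefinite d×d real matrix Σ such that φ(t) = ⟨μ,t⟩ + ½⟨t, Σt⟩ for all t ∈ ℝ^d. -/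
open MeasureTheory Matrix Real

/-!
The shift identity says exactly that `t ↦ φ (t + h) - φ t` is affine along every segment, so the
second difference `φ (t + h) - φ t - φ h + φ 0` is linear in `t`; being symmetric in `(t, h)`, it
is a symmetric bilinear form `B`. Then `φ t - ½ B t t` is additive, and it is continuous along
lines because a moment generating function is, hence linear. Finally `φ 0 = 0` and
`B t t = φ (2t) - 2 φ t ≥ 0`, since `(E e^⟨X,t⟩)² ≤ E e^⟨X,2t⟩`.
-/

section RealVectorSpace

variable {E : Type*} [AddCommGroup E] [Module ℝ E]

theorem exists_linearMap_eq_add_of_affine_on_segments {g : E → ℝ}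
    (hg : ∀ (a b : E) (δ : ℝ), δ ∈ Set.Icc (0 : ℝ) 1 →
      g ((1 - δ) • a + δ • b) = (1 - δ) * g a + δ * g b) :
    ∃ L : E →ₗ[ℝ] ℝ, ∀ x, g x = g 0 + L x := by
  set f : E → ℝ := fun x => g x - g 0 with hf
  have hsmul_Icc : ∀ δ ∈ Set.Icc (0 : ℝ) 1, ∀ x, f (δ • x) = δ * f x := by
    intro δ hδ x
    have := hg 0 x δ hδ
    simp only [smul_zero, zero_add] at this
    simp only [hf, this]
    ring
  have hadd : ∀ x y, f (x + y) = f x + f y := by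
    intro x y
    have hmid := hg x y (1 / 2) (by norm_num)
    have hhalf := hsmul_Icc (1 / 2) (by norm_num) (x + y)
    rw [smul_add] at hhalf
    norm_num at hmid hhalf
    simp only [hf] at hhalf ⊢
    linarith
  have hsmul_nonneg : ∀ c : ℝ, 0 ≤ c → ∀ x, f (c • x) = c * f x := by
    intro c hc x
    rcases le_total c 1 with hc1 | hc1
    · exact hsmul_Icc c ⟨hc, hc1⟩ x
    · have hc0 : c ≠ 0 := by positivity
      have := hsmul_Icc c⁻¹ ⟨by positivity, inv_le_one_of_one_le₀ hc1⟩ (c • x)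
      rw [inv_smul_smul₀ hc0] at this
      field_simp at this ⊢
      linarith
  have hneg : ∀ x, f (-x) = -f x := map_neg (AddMonoidHom.mk' f hadd)
  refine ⟨{ toFun := f, map_add' := hadd, map_smul' := fun c x => ?_ }, fun x => by simp [hf]⟩
  rcases le_total 0 c with hc | hc
  · exact hsmul_nonneg c hc x
  · change f (c • x) = c * f x
    rw [← neg_smul_neg, hsmul_nonneg (-c) (neg_nonneg.mpr hc), hneg]
    ring

theorem exists_symm_bilinear_of_shift_invariant {φ : E → ℝ}
    (hφ : ∀ (t₁ t₂ h : E) (δ : ℝ), δ ∈ Set.Icc (0 : ℝ) 1 →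
      φ ((1 - δ) • t₁ + δ • t₂) - (1 - δ) * φ t₁ - δ * φ t₂
        = φ ((1 - δ) • t₁ + δ • t₂ + h) - (1 - δ) * φ (t₁ + h) - δ * φ (t₂ + h)) :
    ∃ B : E →ₗ[ℝ] E →ₗ[ℝ] ℝ, (∀ u v, B u v = B v u) ∧
      ∀ u v, φ (u + v) = φ u + φ v - φ 0 + B u v := by
  have hL : ∀ h : E, ∃ L : E →ₗ[ℝ] ℝ, ∀ t, φ (t + h) - φ t = φ h - φ 0 + L t := by
    intro h
    obtain ⟨L, hL⟩ := exists_linearMap_eq_add_of_affine_on_segments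
      (g := fun t => φ (t + h) - φ t)
      fun a b δ hδ => by linarith [hφ a b h δ hδ]
    exact ⟨L, fun t => by simpa using hL t⟩
  choose L hL using hL
  have hsymm : ∀ u v, L u v = L v u := fun u v => by
    have := hL v u
    rw [add_comm] at this
    linarith [hL u v]
  refine ⟨LinearMap.mk₂ ℝ (fun u v => L u v) (fun u₁ u₂ v => ?_) (fun c u v => ?_)
    (fun u => map_add (L u)) (fun c u => map_smul (L u) c), fun u v => hsymm u v,
    fun u v => ?_⟩
  · simp only [hsymm _ v, map_add]
  · simp only [hsymm _ v, map_smul]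
  · simp only [LinearMap.mk₂_apply]
    linarith [hL v u, hsymm u v]

theorem exists_linearMap_of_add_of_continuous_smul {ψ : E → ℝ}
    (hadd : ∀ x y, ψ (x + y) = ψ x + ψ y) (hcont : ∀ x, Continuous fun s : ℝ => ψ (s • x)) :
    ∃ L : E →ₗ[ℝ] ℝ, ∀ x, ψ x = L x := by
  refine ⟨{ toFun := ψ, map_add' := hadd, map_smul' := fun c x => ?_ }, fun _ => rfl⟩
  let ψx : ℝ →+ ℝ := AddMonoidHom.mk' (fun s => ψ (s • x)) fun s r => by rw [add_smul, hadd]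
  simpa [ψx] using map_real_smul ψx (hcont x) c 1

theorem exists_linear_add_quadratic_of_shift_invariant {φ : E → ℝ}
    (hφ : ∀ (t₁ t₂ h : E) (δ : ℝ), δ ∈ Set.Icc (0 : ℝ) 1 →
      φ ((1 - δ) • t₁ + δ • t₂) - (1 - δ) * φ t₁ - δ * φ t₂
        = φ ((1 - δ) • t₁ + δ • t₂ + h) - (1 - δ) * φ (t₁ + h) - δ * φ (t₂ + h))
    (hcont : ∀ x, Continuous fun s : ℝ => φ (s • x)) :
    ∃ (L : E →ₗ[ℝ] ℝ) (B : E →ₗ[ℝ] E →ₗ[ℝ] ℝ), (∀ u v, B u v = B v u) ∧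
      (∀ u v, φ (u + v) = φ u + φ v - φ 0 + B u v) ∧
      ∀ t, φ t = φ 0 + L t + 1 / 2 * B t t := by
  obtain ⟨B, hsymm, hB⟩ := exists_symm_bilinear_of_shift_invariant hφ
  obtain ⟨L, hL⟩ := exists_linearMap_of_add_of_continuous_smul
    (ψ := fun t => φ t - φ 0 - 1 / 2 * B t t) (fun x y => by
      simp only [hB, map_add, LinearMap.add_apply, hsymm y x]
      ring)
    (fun x => by
      simp only [map_smul, LinearMap.smul_apply, smul_eq_mul]
      exact ((hcont x).sub continuous_const).sub (by fun_prop))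
  exact ⟨L, B, hsymm, hB, fun t => by linarith [hL t]⟩

end RealVectorSpace

section CumulantGeneratingFunction

variable {Ω ι : Type*} [MeasurableSpace Ω] {P : Measure Ω} [IsProbabilityMeasure P] [Fintype ι]

theorem sq_integral_le_integral_sq {f : Ω → ℝ} (hf : MemLp f 2 P) :
    (∫ ω, f ω ∂P) ^ 2 ≤ ∫ ω, f ω ^ 2 ∂P := by
  have := ProbabilityTheory.variance_nonneg f P
  rw [ProbabilityTheory.variance_eq_sub hf] at this
  simpa [sub_nonneg] using this

variable {X : Ω → (ι → ℝ)}

theorem integral_exp_dotProduct_pos (hint : ∀ t, Integrable (fun ω => exp (X ω ⬝ᵥ t)) P)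
    (t : ι → ℝ) : 0 < ∫ ω, exp (X ω ⬝ᵥ t) ∂P := by
  simpa [ProbabilityTheory.mgf] using
    ProbabilityTheory.mgf_pos (X := fun ω => X ω ⬝ᵥ t) (t := 1) (by simpa using hint t)

theorem continuous_log_integral_exp_dotProduct_smul
    (hint : ∀ t, Integrable (fun ω => exp (X ω ⬝ᵥ t)) P) (w : ι → ℝ) :
    Continuous fun s : ℝ => log (∫ ω, exp (X ω ⬝ᵥ (s • w)) ∂P) := by
  have hint_w : ∀ s : ℝ, Integrable (fun ω => exp (s * X ω ⬝ᵥ w)) P := fun s => by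
    simpa [dotProduct_smul] using hint (s • w)
  refine ((ProbabilityTheory.continuous_mgf hint_w).log fun s => ?_).congr fun s => ?_
  · exact (ProbabilityTheory.mgf_pos (hint_w s)).ne'
  · simp [ProbabilityTheory.mgf, dotProduct_smul]

theorem two_mul_log_integral_exp_dotProduct_le
    (hint : ∀ t, Integrable (fun ω => exp (X ω ⬝ᵥ t)) P) (t : ι → ℝ) :
    2 * log (∫ ω, exp (X ω ⬝ᵥ t) ∂P) ≤ log (∫ ω, exp (X ω ⬝ᵥ (t + t)) ∂P) := by
  have hsq : ∀ ω, exp (X ω ⬝ᵥ (t + t)) = exp (X ω ⬝ᵥ t) ^ 2 := fun ω => by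
    rw [dotProduct_add, exp_add, sq]
  have hmem : MemLp (fun ω => exp (X ω ⬝ᵥ t)) 2 P :=
    (memLp_two_iff_integrable_sq (hint t).aestronglyMeasurable).2 <| by
      simpa only [hsq] using hint (t + t)
  have hle := log_le_log (pow_pos (integral_exp_dotProduct_pos hint t) 2)
    (sq_integral_le_integral_sq hmem)
  rw [log_pow, Nat.cast_ofNat] at hle
  simpa only [hsq] using hle

end CumulantGeneratingFunction

theorem stmt_1_general {Ω : Type*} [MeasurableSpace Ω] (P : Measure Ω) [IsProbabilityMeasure P]
    {d : ℕ} (X : Ω → (Fin d → ℝ))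
    (hint : ∀ t : Fin d → ℝ, Integrable (fun ω => Real.exp (X ω ⬝ᵥ t)) P)
    (φ : (Fin d → ℝ) → ℝ)
    (hφ : ∀ t, φ t = Real.log (∫ ω, Real.exp (X ω ⬝ᵥ t) ∂P))
    (hstat : ∀ (t₁ t₂ h : Fin d → ℝ) (δ : ℝ), δ ∈ Set.Icc (0 : ℝ) 1 →
      φ ((1 - δ) • t₁ + δ • t₂) - (1 - δ) * φ t₁ - δ * φ t₂
        = φ ((1 - δ) • t₁ + δ • t₂ + h) - (1 - δ) * φ (t₁ + h) - δ * φ (t₂ + h)) :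
    ∃ (μ : Fin d → ℝ) (S : Matrix (Fin d) (Fin d) ℝ), S.IsSymm ∧ S.PosSemidef ∧
      ∀ t : Fin d → ℝ, φ t = μ ⬝ᵥ t + (1 / 2) * (t ⬝ᵥ S.mulVec t) := by
  obtain ⟨L, B, hsymm, hB, hφLB⟩ := exists_linear_add_quadratic_of_shift_invariant hstat
    fun w => by simpa only [hφ] using continuous_log_integral_exp_dotProduct_smul hint w
  have hφ0 : φ 0 = 0 := by simp [hφ]
  set S := LinearMap.toMatrix₂' ℝ B
  have hBS : ∀ u v, B u v = u ⬝ᵥ S *ᵥ v := fun u v => by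
    rw [← toLinearMap₂'_apply', toLinearMap₂'_toMatrix']
  have hS : S.IsSymm := by
    ext i j
    simp [S, hsymm]
  refine ⟨(dotProductEquiv ℝ (Fin d)).symm L, S, hS,
    .of_dotProduct_mulVec_nonneg hS fun t => ?_, fun t => ?_⟩
  · have := two_mul_log_integral_exp_dotProduct_le hint t
    rw [star_trivial, ← hBS]
    linarith [hB t t, hφ t, hφ (t + t)]
  · have hμ : (dotProductEquiv ℝ (Fin d)).symm L ⬝ᵥ t = L t := by
      rw [← dotProductEquiv_apply_apply, LinearEquiv.apply_symm_apply]
    rw [hφLB t, hφ0, hBS, hμ, zero_add]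

/-- The two-point (`n = 2`) shift-invariance identity for the everywhere-finite
cumulant generating function `φ(t) = log E[exp⟨X,t⟩]` already forces
`φ(t) = ⟨μ,t⟩ + ½⟨t, Σt⟩` with `Σ` symmetric positive semidefinite. -/
theorem stmt_1 {Ω : Type*} [MeasurableSpace Ω] (P : Measure Ω) [IsProbabilityMeasure P]
    {d : ℕ} (X : Ω → (Fin d → ℝ)) (hX : Measurable X)
    (hint : ∀ t : Fin d → ℝ, Integrable (fun ω => Real.exp (X ω ⬝ᵥ t)) P)
    (φ : (Fin d → ℝ) → ℝ)
    (hφ : ∀ t, φ t = Real.log (∫ ω, Real.exp (X ω ⬝ᵥ t) ∂P))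
    (hstat : ∀ (t₁ t₂ h : Fin d → ℝ) (δ : ℝ), δ ∈ Set.Icc (0 : ℝ) 1 →
      φ ((1 - δ) • t₁ + δ • t₂) - (1 - δ) * φ t₁ - δ * φ t₂
        = φ ((1 - δ) • t₁ + δ • t₂ + h) - (1 - δ) * φ (t₁ + h) - δ * φ (t₂ + h)) :
    ∃ (μ : Fin d → ℝ) (S : Matrix (Fin d) (Fin d) ℝ), S.IsSymm ∧ S.PosSemidef ∧
      ∀ t : Fin d → ℝ, φ t = μ ⬝ᵥ t + (1 / 2) * (t ⬝ᵥ S.mulVec t) :=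
  stmt_1_general P X hint φ hφ hstat
end

section
/- Let φ : ℝ^d → ℝ be differentiable and satisfy, for all t₁, t₂, h ∈ ℝ^d and all δ ∈ [0,1], φ((1−δ)t₁ + δt₂) − (1−δ)φ(t₁) − δφ(t₂) = φ((1−δ)t₁ + δt₂ + h) − (1−δ)φ(t₁ + h) − δφ(t₂ + h). Then for all t₁, t₂ ∈ ℝ^d and δ ∈ [0,1], the gradient satisfies ∇φ((1−δ)t₁ + δt₂) = (1−δ)∇φ(t₁) + δ∇φ(t₂). -/
/-!
Fix `t₁, t₂, δ` and put `c = (1 - δ) • t₁ + δ • t₂`. The hypothesis says that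
`h ↦ φ (c + h) - (1 - δ) * φ (t₁ + h) - δ * φ (t₂ + h)` is constant, so its derivative at `h = 0`,
namely `Dφ(c) - (1 - δ) Dφ(t₁) - δ Dφ(t₂)`, vanishes; the Riesz isomorphism carries this
identity over to gradients.
-/

section TranslationInvariantCombination

variable {𝕜 : Type*} [NontriviallyNormedField 𝕜]
  {E : Type*} [NormedAddCommGroup E] [NormedSpace 𝕜 E]
  {F : Type*} [NormedAddCommGroup F] [NormedSpace 𝕜 F]

theorem fderiv_eq_smul_add_smul_of_translate_const {f : E → F} {c x y : E} {a b : 𝕜}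
    (hc : DifferentiableAt 𝕜 f c) (hx : DifferentiableAt 𝕜 f x) (hy : DifferentiableAt 𝕜 f y)
    (hconst : ∀ h, f (c + h) - a • f (x + h) - b • f (y + h) = f c - a • f x - b • f y) :
    fderiv 𝕜 f c = a • fderiv 𝕜 f x + b • fderiv 𝕜 f y := by
  have hasFDeriv_translate : ∀ {z : E}, DifferentiableAt 𝕜 f z →
      HasFDerivAt (fun h ↦ f (z + h)) (fderiv 𝕜 f z) 0 := fun hz ↦
    (hasFDerivAt_comp_add_left _).2 (by simpa using hz.hasFDerivAt)
  have hcomb : HasFDerivAt (fun h ↦ f (c + h) - a • f (x + h) - b • f (y + h))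
      (fderiv 𝕜 f c - a • fderiv 𝕜 f x - b • fderiv 𝕜 f y) 0 :=
    ((hasFDeriv_translate hc).sub ((hasFDeriv_translate hx).const_smul a)).sub
      ((hasFDeriv_translate hy).const_smul b)
  have hzero : fderiv 𝕜 f c - a • fderiv 𝕜 f x - b • fderiv 𝕜 f y = 0 :=
    hcomb.unique (by rw [funext hconst]; exact hasFDerivAt_const _ _)
  rwa [sub_sub, sub_eq_zero] at hzero

end TranslationInvariantCombination

theorem gradient_eq_smul_add_smul_of_fderiv {F : Type*} [NormedAddCommGroup F]
    [InnerProductSpace ℝ F] [CompleteSpace F] {f : F → ℝ} {c x y : F} {a b : ℝ}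
    (h : fderiv ℝ f c = a • fderiv ℝ f x + b • fderiv ℝ f y) :
    gradient f c = a • gradient f x + b • gradient f y := by
  simp [gradient, h]

/-- If a differentiable `φ : ℝ^d → ℝ` satisfies the two-point shift-invariance
identity, then its gradient is affine along segments: `∇φ((1−δ)t₁ + δt₂) = (1−δ)∇φ(t₁) + δ∇φ(t₂)`. -/
theorem stmt_4 {d : ℕ} (φ : EuclideanSpace ℝ (Fin d) → ℝ) (hdiff : Differentiable ℝ φ)
    (hstat : ∀ (t₁ t₂ h : EuclideanSpace ℝ (Fin d)) (δ : ℝ), δ ∈ Set.Icc (0 : ℝ) 1 →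
      φ ((1 - δ) • t₁ + δ • t₂) - (1 - δ) * φ t₁ - δ * φ t₂
        = φ ((1 - δ) • t₁ + δ • t₂ + h) - (1 - δ) * φ (t₁ + h) - δ * φ (t₂ + h)) :
    ∀ (t₁ t₂ : EuclideanSpace ℝ (Fin d)) (δ : ℝ), δ ∈ Set.Icc (0 : ℝ) 1 →
      gradient φ ((1 - δ) • t₁ + δ • t₂) = (1 - δ) • gradient φ t₁ + δ • gradient φ t₂ := by
  intro t₁ t₂ δ hδ
  exact gradient_eq_smul_add_smul_of_fderiv <|
    fderiv_eq_smul_add_smul_of_translate_const (hdiff _) (hdiff t₁) (hdiff t₂)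
      fun h ↦ (hstat t₁ t₂ h δ hδ).symm
end
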